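/- arXiv:1110.1674 — 3 statements merged into one kernel-verified Lean document; each statement's English description precedes it below -/
import Mathlib

section
/- With F(z) = ∏_{i=1}^n (1 - z x_i)^{m/n} = ∑_k v_k z^k, one has ∑_{i=1}^n ∂v_k/∂x_i = (k - 1 - m)·v_{k-1} for all k ≥ 1. -/
/-!
For `G_a = (1 - a z)^α` and a derivation `d` with `d a = 1`, applying `d` to the coefficients
`C(α, k) (-a)^k` and using `(k + 1) C(α, k + 1) = (α - k) C(α, k)` gives
`d G_a = z (z d/dz - α) G_a`. So each factor of `F` is an eigenvector, with eigenvalue `-α z`,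
of the derivation `d - z² d/dz` of `A⟦z⟧`, hence `F` is one with eigenvalue `-n α z = -m z`.
Comparing coefficients of `z^k` for `d = ∑ i, ∂/∂x_i` gives the claim.
-/

open PowerSeries

/-- Generalized binomial coefficient `C(α, j) = α(α-1)⋯(α-j+1)/j!`. -/
noncomputable def gbinom (α : ℚ) (j : ℕ) : ℚ :=
  (∏ i ∈ Finset.range j, (α - i)) / (j.factorial : ℚ)

/-- The binomial series `(1 + w)^α = ∑_j C(α,j) w^j`, for a power series `w`
(intended to have zero constant term, so that each coefficient is a finite sum). -/
noncomputable def fpow {R : Type*} [CommRing R] [Algebra ℚ R]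
    (w : PowerSeries R) (α : ℚ) : PowerSeries R :=
  PowerSeries.mk fun k => ∑ j ∈ Finset.range (k + 1),
    gbinom α j • (PowerSeries.coeff (R := R) k (w ^ j))

open Finset

theorem Derivation.map_prod_of_map_eq_mul {R A ι : Type*} [CommSemiring R] [CommSemiring A]
    [Algebra R A] (D : Derivation R A A) (s : Finset ι) (f : ι → A) (c : A)
    (h : ∀ j ∈ s, D (f j) = c * f j) : D (∏ j ∈ s, f j) = (#s • c) * ∏ j ∈ s, f j := by
  classical
  induction s using Finset.induction_on with
  | empty => simp
  | insert a s ha ih =>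
    rw [prod_insert ha, D.leibniz, ih fun j hj => h j (mem_insert_of_mem hj),
      h a (mem_insert_self a s), card_insert_of_notMem ha, smul_eq_mul, smul_eq_mul]
    ring

theorem Derivation.finset_sum_apply {ι R A M : Type*} [CommSemiring R] [CommSemiring A]
    [Algebra R A] [AddCommMonoid M] [Module A M] [Module R M] (s : Finset ι)
    (D : ι → Derivation R A M) (a : A) : (∑ i ∈ s, D i) a = ∑ i ∈ s, D i a := by
  rw [← coeFnAddMonoidHom_apply, map_sum, Finset.sum_apply]
  rfl

namespace Derivation

variable {R A : Type*} [CommSemiring R] [CommRing A] [Algebra R A]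

noncomputable def mapPowerSeries (d : Derivation R A A) : Derivation R A⟦X⟧ A⟦X⟧ :=
  Derivation.mk'
    { toFun := fun f => PowerSeries.mk fun n => d (coeff n f)
      map_add' := fun f g => by ext; simp
      map_smul' := fun r f => by ext; simp }
    fun f g => by
      rw [smul_eq_mul, smul_eq_mul, mul_comm g]
      ext n
      simp only [LinearMap.coe_mk, AddHom.coe_mk, coeff_mk, map_add, coeff_mul, map_sum,
        d.leibniz, sum_add_distrib, smul_eq_mul, mul_comm (coeff _ g)]

@[simp]
theorem coeff_mapPowerSeries (d : Derivation R A A) (f : A⟦X⟧) (n : ℕ) :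
    coeff n (d.mapPowerSeries f) = d (coeff n f) := by
  simp [mapPowerSeries]

end Derivation

theorem PowerSeries.coeff_X_mul_derivative {A : Type*} [CommSemiring A] (f : A⟦X⟧) (n : ℕ) :
    coeff n (X * d⁄dX A f) = n * coeff n f := by
  cases n with
  | zero => simp
  | succ n => rw [coeff_succ_X_mul, coeff_derivative, mul_comm]; push_cast; rfl

theorem gbinom_succ (α : ℚ) (k : ℕ) :
    ((k : ℚ) + 1) * gbinom α (k + 1) = (α - k) * gbinom α k := by
  have : (k.factorial : ℚ) ≠ 0 := mod_cast k.factorial_ne_zero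
  rw [gbinom, gbinom, prod_range_succ, Nat.factorial_succ]
  push_cast
  field_simp

section BinomialSeries

variable {A : Type*} [CommRing A] [Algebra ℚ A]

theorem coeff_fpow_neg_C_mul_X (a : A) (α : ℚ) (k : ℕ) :
    coeff k (fpow (-(C a * X)) α) = gbinom α k • (-a) ^ k := by
  have hpow (j : ℕ) : (-(C a * X)) ^ j = C ((-a) ^ j) * X ^ j := by
    rw [← neg_mul, ← map_neg, mul_pow, map_pow]
  rw [fpow, coeff_mk, sum_eq_single_of_mem k (self_mem_range_succ k)]
  · rw [hpow, coeff_C_mul_X_pow, if_pos rfl]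
  · intro j _ hjk
    rw [hpow, coeff_C_mul_X_pow, if_neg hjk.symm, smul_zero]

theorem Derivation.mapPowerSeries_fpow {R : Type*} [CommSemiring R] [Algebra R A]
    (d : Derivation R A A) {a : A} (ha : d a = 1) (α : ℚ) :
    d.mapPowerSeries (fpow (-(C a * X)) α)
      = X * (X * d⁄dX A (fpow (-(C a * X)) α)) - (α • X) * fpow (-(C a * X)) α := by
  ext k
  cases k with
  | zero => simp [coeff_fpow_neg_C_mul_X, map_rat_smul]
  | succ k =>
    rw [map_sub, smul_mul_assoc, coeff_smul, coeff_succ_X_mul, coeff_succ_X_mul,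
      coeff_X_mul_derivative, coeff_mapPowerSeries, coeff_fpow_neg_C_mul_X,
      coeff_fpow_neg_C_mul_X, map_rat_smul, d.leibniz_pow, map_neg, ha, Nat.add_sub_cancel,
      smul_eq_mul, mul_neg_one, ← nsmul_eq_mul]
    linear_combination (norm := module) -(gbinom_succ α k • (-a) ^ k)

end BinomialSeries

theorem Derivation.apply_coeff_succ_prod_fpow {R A ι : Type*} [CommRing R] [CommRing A]
    [Algebra R A] [Algebra ℚ A] (d : Derivation R A A) (s : Finset ι) {a : ι → A}
    (ha : ∀ j ∈ s, d (a j) = 1) (α : ℚ) (k : ℕ) :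
    d (coeff (k + 1) (∏ j ∈ s, fpow (-(C (a j) * X)) α))
      = ((k : ℚ) - #s * α) • coeff k (∏ j ∈ s, fpow (-(C (a j) * X)) α) := by
  set P := ∏ j ∈ s, fpow (-(C (a j) * X)) α
  let E : Derivation R A⟦X⟧ A⟦X⟧ :=
    d.mapPowerSeries - (X : A⟦X⟧) • (X : A⟦X⟧) • (d⁄dX A).restrictScalars R
  have hE : E P = (#s • -(α • X)) * P := by
    refine E.map_prod_of_map_eq_mul s _ _ fun j hj => ?_
    simp [E, d.mapPowerSeries_fpow (ha j hj)]
  have hcoeff := congrArg (coeff (k + 1)) hE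
  simp only [E, Derivation.sub_apply, Derivation.smul_apply, Derivation.restrictScalars_apply,
    smul_eq_mul, map_sub, coeff_mapPowerSeries, coeff_succ_X_mul, coeff_X_mul_derivative,
    smul_mul_assoc, neg_mul, smul_neg, map_nsmul, coeff_smul, map_neg] at hcoeff
  rw [← nsmul_eq_mul] at hcoeff
  linear_combination (norm := module) hcoeff

theorem sum_pderiv_v_general (m n : ℕ) (hn : 0 < n)
    (F : PowerSeries (MvPolynomial (Fin n) ℂ))
    (hF : F = ∏ j : Fin n,
      fpow (-(PowerSeries.C (R := MvPolynomial (Fin n) ℂ) (MvPolynomial.X j) * PowerSeries.X))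
        ((m : ℚ) / n))
    (v : ℕ → MvPolynomial (Fin n) ℂ) (hv : ∀ k, v k = PowerSeries.coeff k F) :
    ∀ k : ℕ, 1 ≤ k →
      ∑ i : Fin n, MvPolynomial.pderiv i (v k) = ((k : ℚ) - 1 - m) • v (k - 1) := by
  intro k hk
  obtain ⟨k, rfl⟩ : ∃ j, k = j + 1 := ⟨k - 1, by omega⟩
  have hdX (j : Fin n) (_ : j ∈ univ) :
      (∑ i, MvPolynomial.pderiv i : Derivation ℂ _ _) (MvPolynomial.X j) = 1 := by
    simp [Derivation.finset_sum_apply, MvPolynomial.pderiv_X]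
  have hα : (#(univ : Finset (Fin n)) : ℚ) * (m / n) = m := by
    rw [card_univ, Fintype.card_fin]
    field_simp
  have key := Derivation.apply_coeff_succ_prod_fpow _ univ hdX (m / n) k
  rw [← hF, ← hv, ← hv, Derivation.finset_sum_apply, hα] at key
  rw [key, Nat.add_sub_cancel]
  congr 1
  push_cast
  ring

/-- `∑ i, ∂v_k/∂x_i = (k - 1 - m) v_{k-1}` for `k ≥ 1`, where `v_k` are the
coefficients of `F(z) = ∏ i, (1 - z x_i)^{m/n}`. -/
theorem sum_pderiv_v (m n : ℕ) (hm : 0 < m) (hn : 0 < n)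
    (F : PowerSeries (MvPolynomial (Fin n) ℂ))
    (hF : F = ∏ j : Fin n,
      fpow (-(PowerSeries.C (R := MvPolynomial (Fin n) ℂ) (MvPolynomial.X j) * PowerSeries.X))
        ((m : ℚ) / n))
    (v : ℕ → MvPolynomial (Fin n) ℂ) (hv : ∀ k, v k = PowerSeries.coeff k F) :
    ∀ k : ℕ, 1 ≤ k →
      ∑ i : Fin n, MvPolynomial.pderiv i (v k) = ((k : ℚ) - 1 - m) • v (k - 1) :=
  sum_pderiv_v_general m n hn F hF v hv
end

section
/- Let m, n be coprime positive integers. Write (1 + z²u_2 + ... + z^n u_n)^{m/n} = ∑_{k≥0} w_k z^k (binomial series over ℚ[u_2,...,u_n]), and let J_{m/n} ⊂ ℚ[u_2,...,u_n] be the ideal generated by {w_k : k ≥ m+1}. Then the equations obtained by eliminating v_2,...,v_m from the system (1 + z²u_2+...+z^n u_n)^m = (1 + z²v_2+...+z^m v_m)^n (coefficientwise in z) generate J_{m/n}: explicitly, setting v_j = w_j for 2 ≤ j ≤ m, the coefficient of z^k for k > m in (1+z²u_2+...+z^n u_n)^m - (1+z²v_2+...+z^m v_m)^n lies in J_{m/n},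 and conversely each w_k for k > m lies in the ideal generated by these coefficients. -/
/-! Put `F = (1 + W)^{m/n}`. Since `fpow W α` is Mathlib's `binomialSeries α` with `W`
substituted for `X`, the identity `(1 + X)^{α+β} = (1 + X)^α (1 + X)^β` gives `F^n = (1 + W)^m`.
As `w₀ = 1` and `w₁ = 0`, the series `1 + ∑_{2 ≤ j ≤ m} w_j z^j` is the truncation `T` of `F`
below degree `m + 1`, so `D = F^n - T^n = G (F - T)` with `G = ∑ F^i T^{n-1-i}`. The constant
term of `G` is `n`, a unit, so `D` and `F - T = ∑_{k > m} w_k z^k` divide each other. Both are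
divisible by `z^{m+1}`, hence each coefficient of one is a combination of the coefficients of
the other in degrees `> m`. -/

open PowerSeries

open Finset

lemma gbinom_eq_choose (α : ℚ) (j : ℕ) : gbinom α j = Ring.choose α j := by
  rw [Ring.choose_eq_smul, gbinom, ← descPochhammer_eval_eq_prod_range, smul_eq_mul,
    ← Polynomial.aeval_eq_smeval, Polynomial.aeval_def, ← Polynomial.eval_map,
    descPochhammer_map, div_eq_inv_mul]

lemma PowerSeries.binomialSeries_nsmul {R A : Type*} [CommRing R] [BinomialRing R] [Ring A]
    [Algebra R A] (r : R) (n : ℕ) :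
    binomialSeries A (n • r) = binomialSeries A r ^ n := by
  induction n with
  | zero => simp
  | succ n ih => rw [succ_nsmul, binomialSeries_add, ih, pow_succ]

section

variable {A : Type*} [CommRing A] [Algebra ℚ A]

lemma fpow_eq_subst_binomialSeries {W : A⟦X⟧} (hW : constantCoeff W = 0) (α : ℚ) :
    fpow W α = (PowerSeries.binomialSeries ℚ α).subst W := by
  ext k
  have hsupp : Function.support
      (fun d ↦ coeff d (PowerSeries.binomialSeries ℚ α) • coeff k (W ^ d)) ⊆ range (k + 1) := by
    intro d hd
    by_contra hdk
    refine hd ?_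
    have hX : (X : A⟦X⟧) ^ d ∣ W ^ d := pow_dvd_pow_of_dvd (X_dvd_iff.mpr hW) d
    simp only [X_pow_dvd_iff.mp hX k (by simpa using hdk), smul_zero]
  rw [coeff_subst' (HasSubst.of_constantCoeff_zero' hW), finsum_eq_sum_of_support_subset _ hsupp,
    fpow, coeff_mk]
  simp [gbinom_eq_choose]

lemma fpow_div_pow {W : A⟦X⟧} (hW : constantCoeff W = 0) {m n : ℕ} (hn : n ≠ 0) :
    fpow W ((m : ℚ) / n) ^ n = (1 + W) ^ m := by
  have hsubst := HasSubst.of_constantCoeff_zero' hW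
  rw [fpow_eq_subst_binomialSeries hW, ← coe_substAlgHom hsubst, ← map_pow,
    ← binomialSeries_nsmul, nsmul_eq_mul, mul_div_cancel₀ _ (Nat.cast_ne_zero.mpr hn),
    binomialSeries_nat, map_pow, map_add, map_one, coe_substAlgHom, subst_X hsubst]

end

section

variable {R : Type*} [CommRing R]

lemma one_add_sum_Icc_eq_trunc {F : R⟦X⟧} (h0 : coeff 0 F = 1) (h1 : coeff 1 F = 0) (m : ℕ) :
    1 + ∑ j ∈ Icc 2 m, C (coeff j F) * X ^ j = (trunc (m + 1) F : R⟦X⟧) := by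
  ext k
  simp only [map_add, map_sum, coeff_one, coeff_C_mul_X_pow, sum_ite_eq, mem_Icc,
    Polynomial.coeff_coe, coeff_trunc]
  rcases k with _ | _ | k
  · simp [h0]
  · simp [h1]
  · simp only [Nat.add_eq_zero_iff, one_ne_zero, and_false, if_false, zero_add]
    exact if_congr (by omega) rfl rfl

lemma X_pow_dvd_sub_trunc (F : R⟦X⟧) (n : ℕ) : X ^ n ∣ F - (trunc n F : R⟦X⟧) :=
  X_pow_dvd_iff.mpr fun k hk ↦ by rw [map_sub, coeff_coe_trunc_of_lt hk, sub_self]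

lemma coeff_sub_trunc_of_le {F : R⟦X⟧} {n k : ℕ} (hk : n ≤ k) :
    coeff k (F - (trunc n F : R⟦X⟧)) = coeff k F := by
  rw [map_sub, Polynomial.coeff_coe, coeff_trunc, if_neg (not_lt.mpr hk), sub_zero]

lemma pow_sub_pow_dvd_sub {n : ℕ} (hn : IsUnit (n : R)) {F T : R⟦X⟧}
    (hF : constantCoeff F = 1) (hT : constantCoeff T = 1) : F ^ n - T ^ n ∣ F - T := by
  rw [← geom_sum₂_mul]
  refine (IsUnit.mul_left_dvd ?_).mpr dvd_rfl
  rw [isUnit_iff_constantCoeff, map_sum]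
  simpa [hF, hT] using hn

lemma coeff_mem_span_coeff_gt_of_dvd {m : ℕ} {P Q : R⟦X⟧} (hQ : X ^ (m + 1) ∣ Q) (h : Q ∣ P)
    (k : ℕ) : coeff k P ∈ Ideal.span {g | ∃ k', m < k' ∧ g = coeff k' Q} := by
  obtain ⟨G, rfl⟩ := h
  rw [mul_comm, coeff_mul]
  refine Ideal.sum_mem _ fun p _ ↦ ?_
  rcases lt_or_ge m p.2 with hp | hp
  · exact Ideal.mul_mem_left _ _ (Ideal.subset_span ⟨p.2, hp, rfl⟩)
  · rw [X_pow_dvd_iff.mp hQ p.2 (Nat.lt_succ_of_le hp), mul_zero]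
    exact Ideal.zero_mem _

end

theorem eliminate_v_general (m n : ℕ) (hn : 0 < n)
    (W : PowerSeries (MvPolynomial (Fin (n - 1)) ℚ))
    (hW : W = ∑ i : Fin (n - 1),
      PowerSeries.C (R := MvPolynomial (Fin (n - 1)) ℚ) (MvPolynomial.X i) *
        PowerSeries.X ^ ((i : ℕ) + 2))
    (w : ℕ → MvPolynomial (Fin (n - 1)) ℚ)
    (hw : ∀ k, w k = PowerSeries.coeff k (fpow W ((m : ℚ) / n)))
    (J : Ideal (MvPolynomial (Fin (n - 1)) ℚ))
    (hJ : J = Ideal.span {g | ∃ k, m + 1 ≤ k ∧ g = w k})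
    (D : PowerSeries (MvPolynomial (Fin (n - 1)) ℚ))
    (hD : D = (1 + W) ^ m -
      (1 + ∑ j ∈ Finset.Icc 2 m,
        PowerSeries.C (R := MvPolynomial (Fin (n - 1)) ℚ) (w j) * PowerSeries.X ^ j) ^ n) :
    (∀ k, m < k → PowerSeries.coeff k D ∈ J) ∧
    (∀ k, m < k →
      w k ∈ Ideal.span {g | ∃ k', m < k' ∧ g = PowerSeries.coeff k' D}) := by
  set F := fpow W ((m : ℚ) / n)
  set T : PowerSeries (MvPolynomial (Fin (n - 1)) ℚ) := ↑(trunc (m + 1) F)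
  have hW2 : X ^ 2 ∣ W := hW ▸ dvd_sum fun i _ ↦ (pow_dvd_pow X (by omega)).mul_left _
  have hW0 : constantCoeff W = 0 := X_dvd_iff.mp ((dvd_pow_self X two_ne_zero).trans hW2)
  have hF0 : coeff 0 F = 1 := by simp [F, fpow, gbinom]
  have hF1 : coeff 1 F = 0 := by simp [F, fpow, sum_range_succ, X_pow_dvd_iff.mp hW2 1]
  have hT0 : constantCoeff T = 1 := by
    rw [← coeff_zero_eq_constantCoeff_apply, coeff_coe_trunc_of_lt m.succ_pos, hF0]
  have hD' : D = F ^ n - T ^ n := by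
    rw [hD, ← fpow_div_pow hW0 hn.ne']
    simp only [hw, one_add_sum_Icc_eq_trunc hF0 hF1, F, T]
  have hnU : IsUnit (n : MvPolynomial (Fin (n - 1)) ℚ) := by
    simpa using (Nat.cast_ne_zero.mpr hn.ne' : (n : ℚ) ≠ 0).isUnit.map MvPolynomial.C
  have hX : X ^ (m + 1) ∣ F - T := X_pow_dvd_sub_trunc F _
  have hFT_dvd_D : F - T ∣ D := hD' ▸ sub_dvd_pow_sub_pow _ _ n
  have hD_dvd_FT : D ∣ F - T :=
    hD' ▸ pow_sub_pow_dvd_sub hnU (by rwa [← coeff_zero_eq_constantCoeff_apply]) hT0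
  have hJ' : J = Ideal.span {g | ∃ k', m < k' ∧ g = coeff k' (F - T)} := by
    rw [hJ]
    congr 1
    ext g
    refine exists_congr fun k ↦ and_congr_right fun hk ↦ ?_
    rw [hw, coeff_sub_trunc_of_le hk]
  refine ⟨fun k _ ↦ hJ' ▸ coeff_mem_span_coeff_gt_of_dvd hX hFT_dvd_D k, fun k hk ↦ ?_⟩
  rw [hw, ← coeff_sub_trunc_of_le hk]
  exact coeff_mem_span_coeff_gt_of_dvd (hX.trans hFT_dvd_D) hD_dvd_FT k

/-- Elimination of the `v`-variables: with `w_k = Coef_k[(1+z²u₂+⋯+zⁿuₙ)^{m/n}]` and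
`J_{m/n} = (w_k : k ≥ m+1)`, substituting `v_j = w_j` in
`(1+z²u₂+⋯+zⁿuₙ)^m - (1+z²v₂+⋯+z^m v_m)^n`, every `z`-coefficient of degree `> m`
lies in `J_{m/n}`, and conversely each `w_k`, `k > m`, lies in the ideal generated by
these coefficients.  The variable `X i` of `ℚ[Fin (n-1)]` stands for `u_{i+2}`. -/
theorem eliminate_v (m n : ℕ) (hm : 0 < m) (hn : 0 < n) (hmn : Nat.Coprime m n)
    (W : PowerSeries (MvPolynomial (Fin (n - 1)) ℚ))
    (hW : W = ∑ i : Fin (n - 1),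
      PowerSeries.C (R := MvPolynomial (Fin (n - 1)) ℚ) (MvPolynomial.X i) *
        PowerSeries.X ^ ((i : ℕ) + 2))
    (w : ℕ → MvPolynomial (Fin (n - 1)) ℚ)
    (hw : ∀ k, w k = PowerSeries.coeff k (fpow W ((m : ℚ) / n)))
    (J : Ideal (MvPolynomial (Fin (n - 1)) ℚ))
    (hJ : J = Ideal.span {g | ∃ k, m + 1 ≤ k ∧ g = w k})
    (D : PowerSeries (MvPolynomial (Fin (n - 1)) ℚ))
    (hD : D = (1 + W) ^ m -
      (1 + ∑ j ∈ Finset.Icc 2 m,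
        PowerSeries.C (R := MvPolynomial (Fin (n - 1)) ℚ) (w j) * PowerSeries.X ^ j) ^ n) :
    (∀ k, m < k → PowerSeries.coeff k D ∈ J) ∧
    (∀ k, m < k →
      w k ∈ Ideal.span {g | ∃ k', m < k' ∧ g = PowerSeries.coeff k' D}) :=
  eliminate_v_general m n hn W hW w hw J hJ D hD
end

section
/- Let m, n be coprime, F(z) = ∏_{i=1}^n (1-z x_i)^{m/n} = ∑ v_k z^k over ℂ[x_1,...,x_n], B_i(z) = F(z)/(1-z x_i), and f_i = Coef_m[B_i(z)]. Let I be the ideal of ℂ[x_1,...,x_n] generated by f_1,...,f_n together with v_{m+1},...,v_{m+n-1}. Then Coef_k[B_i(z)] ∈ I for every k ≥ m and every i. -/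
/-!
Logarithmic differentiation of `F = ∏ⱼ (1 - z xⱼ)^{m/n}`, using `(1 + c z) y' = α c y` for
`y = (1 + c z)^α`, gives `(k + 1) v_{k+1} = -(m/n) ∑ⱼ xⱼ Coef_k[Bⱼ]`, and `(1 - z xᵢ) Bᵢ = F` gives
`Coef_{k+1}[Bᵢ] = v_{k+1} + xᵢ Coef_k[Bᵢ]`. By induction on `k ≥ m`, every `Coef_k[Bᵢ]` therefore
lies in the ideal generated by `f₁, …, fₙ`.
-/

open PowerSeries

theorem gbinom_zero (α : ℚ) : gbinom α 0 = 1 := by simp [gbinom]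

theorem gbinom_one (α : ℚ) : gbinom α 1 = α := by simp [gbinom]

theorem succ_mul_gbinom_succ (α : ℚ) (j : ℕ) :
    (j + 1 : ℚ) * gbinom α (j + 1) = (α - j) * gbinom α j := by
  rw [gbinom, gbinom, Finset.prod_range_succ, Nat.factorial_succ]
  have : (j.factorial : ℚ) ≠ 0 := mod_cast j.factorial_ne_zero
  push_cast
  field_simp

section

variable {R : Type*} [CommRing R]

theorem Derivation.leibniz_prod_of_eq_mul {A : Type*} [CommRing A] [Algebra R A]
    {ι : Type*} (D : Derivation R A A) (s : Finset ι) (G w : ι → A)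
    (h : ∀ j ∈ s, D (G j) = w j * G j) :
    D (∏ j ∈ s, G j) = (∑ j ∈ s, w j) * ∏ j ∈ s, G j := by
  classical
  induction s using Finset.induction_on with
  | empty => simp
  | insert a s ha ih =>
    rw [Finset.prod_insert ha, Finset.sum_insert ha, Derivation.leibniz, smul_eq_mul, smul_eq_mul,
      ih fun j hj => h j (Finset.mem_insert_of_mem hj), h a (Finset.mem_insert_self a s)]
    ring

theorem coeff_succ_eq_of_mul_eq {B F : R⟦X⟧} {x : R} (h : (1 - C x * X) * B = F) (k : ℕ) :
    coeff (k + 1) B = coeff (k + 1) F + x * coeff k B := by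
  rw [← h, sub_mul, one_mul, mul_assoc, map_sub, coeff_C_mul, X_mul, coeff_succ_mul_X]
  ring

theorem mul_invOfUnit_one_sub_C_mul_X (x : R) : (1 - C x * X) * invOfUnit (1 - C x * X) 1 = 1 :=
  mul_invOfUnit _ 1 (by simp)

variable [Algebra ℚ R]

theorem coeff_fpow_C_mul_X (c : R) (α : ℚ) (k : ℕ) :
    coeff k (fpow (C c * X) α) = gbinom α k • c ^ k := by
  rw [fpow, coeff_mk, Finset.sum_eq_single_of_mem k (Finset.self_mem_range_succ k)]
  · rw [mul_pow, ← map_pow, coeff_C_mul_X_pow, if_pos rfl]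
  · intro j _ hjk
    rw [mul_pow, ← map_pow, coeff_C_mul_X_pow, if_neg (Ne.symm hjk), smul_zero]

theorem one_add_C_mul_X_mul_derivative_fpow (c : R) (α : ℚ) :
    (1 + C c * X) * d⁄dX R (fpow (C c * X) α) = C (α • c) * fpow (C c * X) α := by
  ext k
  rw [add_mul, one_mul, mul_assoc, mul_comm X, map_add, coeff_C_mul, coeff_C_mul]
  simp only [coeff_derivative, coeff_fpow_C_mul_X, Algebra.smul_def]
  cases k with
  | zero =>
    simp [gbinom_zero, gbinom_one]
  | succ k =>
    rw [coeff_succ_mul_X, coeff_derivative, coeff_fpow_C_mul_X, Algebra.smul_def]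
    have key := congrArg (algebraMap ℚ R) (succ_mul_gbinom_succ α (k + 1))
    simp only [map_mul, map_add, map_sub, map_one, map_natCast, Nat.cast_add, Nat.cast_one] at key
    push_cast
    linear_combination c ^ (k + 2) * key

theorem derivative_fpow_neg_C_mul_X (x : R) (α : ℚ) :
    d⁄dX R (fpow (-(C x * X)) α) =
      C (-(α • x)) * invOfUnit (1 - C x * X) 1 * fpow (-(C x * X)) α := by
  have hode := one_add_C_mul_X_mul_derivative_fpow (-x) α
  rw [map_neg, neg_mul, ← sub_eq_add_neg, smul_neg] at hode
  calc d⁄dX R (fpow (-(C x * X)) α)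
      = invOfUnit (1 - C x * X) 1 * ((1 - C x * X) * d⁄dX R (fpow (-(C x * X)) α)) := by
        rw [← mul_assoc, mul_comm (invOfUnit _ _), mul_invOfUnit_one_sub_C_mul_X, one_mul]
    _ = _ := by rw [hode]; ring

theorem derivative_prod_fpow {ι : Type*} [Fintype ι] (x : ι → R) (α : ℚ) :
    d⁄dX R (∏ j, fpow (-(C (x j) * X)) α) =
      ∑ j, C (-(α • x j)) * (invOfUnit (1 - C (x j) * X) 1 * ∏ l, fpow (-(C (x l) * X)) α) := by
  rw [Derivation.leibniz_prod_of_eq_mul _ _ _ _ fun j _ => derivative_fpow_neg_C_mul_X (x j) α,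
    Finset.sum_mul]
  simp only [mul_assoc]

theorem mem_of_le_of_recurrence {ι : Type*} [Fintype ι] (J : Ideal R) (b : ι → ℕ → R)
    (v : ℕ → R) (x c : ι → R) {m : ℕ}
    (hb : ∀ i k, b i (k + 1) = v (k + 1) + x i * b i k)
    (hv : ∀ k, v (k + 1) * (k + 1) = ∑ j, c j * b j k)
    (hm : ∀ i, b i m ∈ J) {k : ℕ} (hk : m ≤ k) : ∀ i, b i k ∈ J := by
  induction k, hk using Nat.le_induction with
  | base => exact hm
  | succ k _ ih =>
    have hunit : IsUnit ((k : R) + 1) := by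
      simpa using (Nat.cast_add_one_ne_zero (R := ℚ) k).isUnit.map (algebraMap ℚ R)
    have hvk : v (k + 1) ∈ J := by
      rw [← J.unit_mul_mem_iff_mem hunit, mul_comm, hv]
      exact J.sum_mem fun j _ => J.mul_mem_left _ (ih j)
    intro i
    rw [hb]
    exact J.add_mem hvk (J.mul_mem_left _ (ih i))

end

theorem coeff_B_mem_ideal_general (m n : ℕ)
    (F : PowerSeries (MvPolynomial (Fin n) ℂ))
    (hF : F = ∏ j : Fin n,
      fpow (-(PowerSeries.C (R := MvPolynomial (Fin n) ℂ) (MvPolynomial.X j) * PowerSeries.X))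
        ((m : ℚ) / n))
    (v : ℕ → MvPolynomial (Fin n) ℂ) (hv : ∀ k, v k = PowerSeries.coeff k F)
    (B : Fin n → PowerSeries (MvPolynomial (Fin n) ℂ))
    (hB : ∀ i, B i = PowerSeries.invOfUnit
      (1 - PowerSeries.C (R := MvPolynomial (Fin n) ℂ) (MvPolynomial.X i) * PowerSeries.X) 1 * F)
    (f : Fin n → MvPolynomial (Fin n) ℂ) (hf : ∀ i, f i = PowerSeries.coeff m (B i))
    (I : Ideal (MvPolynomial (Fin n) ℂ))
    (hI : I = Ideal.span
      ({g | ∃ i, g = f i} ∪ {g | ∃ j, 1 ≤ j ∧ j ≤ n - 1 ∧ g = v (m + j)})) :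
    ∀ (k : ℕ), m ≤ k → ∀ i : Fin n, PowerSeries.coeff k (B i) ∈ I := by
  intro k hk
  have hBF : ∀ i, (1 - C (MvPolynomial.X i) * X) * B i = F := fun i => by
    rw [hB, ← mul_assoc, mul_invOfUnit_one_sub_C_mul_X, one_mul]
  have hdF := derivative_prod_fpow (R := MvPolynomial (Fin n) ℂ) MvPolynomial.X ((m : ℚ) / n)
  rw [← hF] at hdF
  simp only [← hB] at hdF
  refine mem_of_le_of_recurrence I (fun i k => coeff k (B i)) v MvPolynomial.X
    (fun j => -(((m : ℚ) / n) • MvPolynomial.X j)) (fun i k => ?_) (fun k => ?_) (fun i => ?_) hk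
  · rw [hv]
    exact coeff_succ_eq_of_mul_eq (hBF i) k
  · rw [hv, ← coeff_derivative, hdF, map_sum]
    simp only [coeff_C_mul]
  · rw [← hf, hI]
    exact Ideal.subset_span (Or.inl ⟨i, rfl⟩)

/-- Let `I` be the ideal generated by `f₁,…,fₙ` and `v_{m+1},…,v_{m+n-1}`.
Then `Coef_k[B_i(z)] ∈ I` for every `k ≥ m` and every `i`. -/
theorem coeff_B_mem_ideal (m n : ℕ) (hm : 0 < m) (hn : 0 < n) (hmn : Nat.Coprime m n)
    (F : PowerSeries (MvPolynomial (Fin n) ℂ))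
    (hF : F = ∏ j : Fin n,
      fpow (-(PowerSeries.C (R := MvPolynomial (Fin n) ℂ) (MvPolynomial.X j) * PowerSeries.X))
        ((m : ℚ) / n))
    (v : ℕ → MvPolynomial (Fin n) ℂ) (hv : ∀ k, v k = PowerSeries.coeff k F)
    (B : Fin n → PowerSeries (MvPolynomial (Fin n) ℂ))
    (hB : ∀ i, B i = PowerSeries.invOfUnit
      (1 - PowerSeries.C (R := MvPolynomial (Fin n) ℂ) (MvPolynomial.X i) * PowerSeries.X) 1 * F)
    (f : Fin n → MvPolynomial (Fin n) ℂ) (hf : ∀ i, f i = PowerSeries.coeff m (B i))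
    (I : Ideal (MvPolynomial (Fin n) ℂ))
    (hI : I = Ideal.span
      ({g | ∃ i, g = f i} ∪ {g | ∃ j, 1 ≤ j ∧ j ≤ n - 1 ∧ g = v (m + j)})) :
    ∀ (k : ℕ), m ≤ k → ∀ i : Fin n, PowerSeries.coeff k (B i) ∈ I :=
  coeff_B_mem_ideal_general m n F hF v hv B hB f hf I hI
end
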